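/- arXiv:math/9907206 — 5 statements merged into one kernel-verified Lean document; each statement's English description precedes it below -/
import Mathlib

section
/- Let V be a finite-dimensional real vector space with a complex structure J, and h ⊆ End_ℝ(V) a Lie subalgebra commuting with J, and let V_ℂ = W ⊕ W̄ where W = {x + iJx : x ∈ V} and W̄ = {x − iJx : x ∈ V}. Then for any R ∈ K(h_ℂ) and any u, v ∈ W, the endomorphism R(u,v) annihilates W̄, i.e., R(u,v)w̄ = 0 for all w̄ ∈ W̄. -/
open TensorProduct

attribute [local instance 100] LieRing.ofAssociativeRing

/-- The complexification `𝔥_ℂ ⊆ End_ℂ(V ⊗ ℂ)` of a real Lie subalgebra `𝔥 ⊆ End_ℝ(V)`. -/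
noncomputable def complexifySubalgebra {V : Type*} [AddCommGroup V] [Module ℝ V]
    (h : LieSubalgebra ℝ (Module.End ℝ V)) :
    LieSubalgebra ℂ (Module.End ℂ (ℂ ⊗[ℝ] V)) :=
  LieSubalgebra.lieSpan ℂ (Module.End ℂ (ℂ ⊗[ℝ] V))
    ((fun A : Module.End ℝ V => LinearMap.baseChange ℂ A) ''
      (h : Set (Module.End ℝ V)))

/-- `W = {x + iJx | x ∈ V} ⊆ V_ℂ`. -/
noncomputable def Wplus {V : Type*} [AddCommGroup V] [Module ℝ V]
    (J : Module.End ℝ V) : Submodule ℂ (ℂ ⊗[ℝ] V) :=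
  Submodule.span ℂ
    {z : ℂ ⊗[ℝ] V | ∃ x : V, z = (1 : ℂ) ⊗ₜ[ℝ] x + Complex.I • ((1 : ℂ) ⊗ₜ[ℝ] (J x))}

/-- `W̄ = {x − iJx | x ∈ V} ⊆ V_ℂ`. -/
noncomputable def Wminus {V : Type*} [AddCommGroup V] [Module ℝ V]
    (J : Module.End ℝ V) : Submodule ℂ (ℂ ⊗[ℝ] V) :=
  Submodule.span ℂ
    {z : ℂ ⊗[ℝ] V | ∃ x : V, z = (1 : ℂ) ⊗ₜ[ℝ] x - Complex.I • ((1 : ℂ) ⊗ₜ[ℝ] (J x))}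

/-- Endomorphisms preserving a submodule form a Lie subalgebra. -/
def endStabLie {M : Type*} [AddCommGroup M] [Module ℂ M] (p : Submodule ℂ M) :
    LieSubalgebra ℂ (Module.End ℂ M) where
  carrier := {f | ∀ x ∈ p, f x ∈ p}
  add_mem' := fun hf hg x hx => by
    simpa using p.add_mem (hf x hx) (hg x hx)
  zero_mem' := fun x hx => by simpa using p.zero_mem
  smul_mem' := fun c f hf x hx => by
    simpa using p.smul_mem c (hf x hx)
  lie_mem' := fun {f g} hf hg x hx => by
    have : (⁅f, g⁆ : Module.End ℂ M) x = f (g x) - g (f x) := by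
      simp [Ring.lie_def, LinearMap.sub_apply, Module.End.mul_apply]
    rw [this]
    exact p.sub_mem (hf _ (hg x hx)) (hg _ (hf x hx))

theorem mem_endStabLie {M : Type*} [AddCommGroup M] [Module ℂ M] (p : Submodule ℂ M)
    (f : Module.End ℂ M) : f ∈ endStabLie p ↔ ∀ x ∈ p, f x ∈ p := Iff.rfl

theorem eigen_Wplus {V : Type*} [AddCommGroup V] [Module ℝ V]
    (J : Module.End ℝ V) (hJ : ∀ x : V, J (J x) = -x) :
    ∀ z ∈ Wplus J, LinearMap.baseChange ℂ J z = (-Complex.I) • z := by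
  intro z hz
  induction hz using Submodule.span_induction with
  | mem z hzm =>
    obtain ⟨x, rfl⟩ := hzm
    rw [map_add, map_smul, LinearMap.baseChange_tmul, LinearMap.baseChange_tmul, hJ,
      smul_add, smul_smul, neg_mul, Complex.I_mul_I, neg_neg, one_smul, tmul_neg, smul_neg]
    module
  | zero => simp
  | add a b _ _ ha hb => simp [ha, hb]
  | smul c a _ ha => rw [map_smul, ha, smul_comm]

theorem eigen_Wminus {V : Type*} [AddCommGroup V] [Module ℝ V]
    (J : Module.End ℝ V) (hJ : ∀ x : V, J (J x) = -x) :
    ∀ z ∈ Wminus J, LinearMap.baseChange ℂ J z = Complex.I • z := by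
  intro z hz
  induction hz using Submodule.span_induction with
  | mem z hzm =>
    obtain ⟨x, rfl⟩ := hzm
    rw [map_sub, map_smul, LinearMap.baseChange_tmul, LinearMap.baseChange_tmul, hJ,
      smul_sub, smul_smul, Complex.I_mul_I, neg_one_smul, tmul_neg, smul_neg]
    module
  | zero => simp
  | add a b _ _ ha hb => simp [ha, hb]
  | smul c a _ ha => rw [map_smul, ha, smul_comm]

theorem Wplus_inter_Wminus {V : Type*} [AddCommGroup V] [Module ℝ V]
    (J : Module.End ℝ V) (hJ : ∀ x : V, J (J x) = -x)
    {z : ℂ ⊗[ℝ] V} (h1 : z ∈ Wplus J) (h2 : z ∈ Wminus J) : z = 0 := by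
  have e1 := eigen_Wplus J hJ z h1
  have e2 := eigen_Wminus J hJ z h2
  have : ((2 : ℂ) * Complex.I) • z = 0 := by
    have : Complex.I • z - (-Complex.I) • z = 0 := by rw [← e1, ← e2, sub_self]
    rw [← this]
    rw [neg_smul, sub_neg_eq_add, two_mul, add_smul]
  rcases smul_eq_zero.mp this with hc | hz0
  · exact absurd hc (by simp [Complex.I_ne_zero])
  · exact hz0

theorem complexify_le_stab {V : Type*} [AddCommGroup V] [Module ℝ V]
    (J : Module.End ℝ V) (h : LieSubalgebra ℝ (Module.End ℝ V))
    (hcomm : ∀ A ∈ h, ∀ x : V, A (J x) = J (A x)) :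
    complexifySubalgebra h ≤ endStabLie (Wplus J) ⊓ endStabLie (Wminus J) := by
  rw [complexifySubalgebra, LieSubalgebra.lieSpan_le]
  rintro f ⟨A, hA, rfl⟩
  constructor
  · intro z hz
    have key : Wplus J ≤ Submodule.comap (LinearMap.baseChange ℂ A) (Wplus J) := by
      rw [Wplus, Submodule.span_le]
      rintro _ ⟨x, rfl⟩
      refine Submodule.subset_span ⟨A x, ?_⟩
      rw [map_add, map_smul, LinearMap.baseChange_tmul, LinearMap.baseChange_tmul, hcomm A hA]
    exact key hz
  · intro z hz
    have key : Wminus J ≤ Submodule.comap (LinearMap.baseChange ℂ A) (Wminus J) := by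
      rw [Wminus, Submodule.span_le]
      rintro _ ⟨x, rfl⟩
      refine Submodule.subset_span ⟨A x, ?_⟩
      rw [map_sub, map_smul, LinearMap.baseChange_tmul, LinearMap.baseChange_tmul, hcomm A hA]
    exact key hz

/-- if `J` is a complex structure on the real vector space `V` commuting
with the elements of `𝔥`, then for any formal curvature map `R ∈ K(𝔥_ℂ)` and any
`u, v ∈ W`, the endomorphism `R(u,v)` annihilates `W̄`. -/
theorem curvature_annihilates_conjugate_subspace
    {V : Type*} [AddCommGroup V] [Module ℝ V] [FiniteDimensional ℝ V]
    (J : Module.End ℝ V) (hJ : ∀ x : V, J (J x) = -x)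
    (h : LieSubalgebra ℝ (Module.End ℝ V))
    (hcomm : ∀ A ∈ h, ∀ x : V, A (J x) = J (A x))
    (R : (ℂ ⊗[ℝ] V) →ₗ[ℂ] (ℂ ⊗[ℝ] V) →ₗ[ℂ] Module.End ℂ (ℂ ⊗[ℝ] V))
    (hmem : ∀ x y, R x y ∈ complexifySubalgebra h)
    (halt : ∀ x, R x x = 0)
    (hbianchi : ∀ x y z, R x y z + R y z x + R z x y = 0) :
    ∀ u ∈ Wplus J, ∀ v ∈ Wplus J, ∀ w ∈ Wminus J, R u v w = 0 := by
  intro u hu v hv w hw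
  have stabP : ∀ x y, ∀ z ∈ Wplus J, R x y z ∈ Wplus J := fun x y =>
    ((complexify_le_stab J h hcomm (hmem x y)).1 : _)
  have stabM : ∀ x y, ∀ z ∈ Wminus J, R x y z ∈ Wminus J := fun x y =>
    ((complexify_le_stab J h hcomm (hmem x y)).2 : _)
  have h1 : R u v w ∈ Wminus J := stabM u v w hw
  have h2 : R u v w ∈ Wplus J := by
    have hb := hbianchi u v w
    have : R u v w = -(R v w u + R w u v) := by
      rw [eq_neg_iff_add_eq_zero, ← add_assoc]; exact hb
    rw [this]
    exact (Wplus J).neg_mem ((Wplus J).add_mem (stabP v w u hu) (stabP w u v hv))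
  exact Wplus_inter_Wminus J hJ h2 h1
end

section
/- Let V be a Euclidean vector space (over ℝ or ℂ with a nondegenerate symmetric bilinear form), identify so(V) with Λ²V via (x∧y)·z = ⟨x,z⟩y − ⟨y,z⟩x. For A ∈ so(V), define R_A : Λ²V → gl(V) by R_A(x,y) = ⟨Ax,y⟩·Id + (x∧Ay) + (Ax∧y) (the formula R_A = (A,·)Id + ad(A) in the identification). Then R_A satisfies the first Bianchi identity: R_A(x,y)z + R_A(y,z)x + R_A(z,x)y = 0 for all x,y,z ∈ V; hence R_A ∈ K(so(V) ⊕ F·Id). -/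
/-- on a vector space with a nondegenerate symmetric bilinear form `B`,
for a skew-symmetric endomorphism `A` the formal curvature map
`R_A = (A,·)·Id + ad(A)` (in the identification `so(V) ≅ Λ²V`,
`(x∧y)·z = B(x,z)y − B(y,z)x`, where `(A, x∧y) = 2·B(Ax,y)` is the suitable multiple
of the invariant pairing) satisfies the first Bianchi identity; hence
`R_A ∈ K(so(V) ⊕ F·Id)`.  Explicitly,
`R_A(x,y)z = 2B(Ax,y)z + (x ∧ Ay)z + (Ax ∧ y)z`. -/
theorem conformal_curvature_bianchi
    {F V : Type*} [Field F] [AddCommGroup V] [Module F V] [FiniteDimensional F V]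
    (B : V →ₗ[F] V →ₗ[F] F)
    (hsymm : ∀ x y : V, B x y = B y x)
    (hnondeg : ∀ x : V, (∀ y : V, B x y = 0) → x = 0)
    (A : Module.End F V)
    (hskew : ∀ x y : V, B (A x) y + B x (A y) = 0) :
    ∀ x y z : V,
      ((2 * B (A x) y) • z + (B x z • A y - B (A y) z • x) + (B (A x) z • y - B y z • A x))
      + ((2 * B (A y) z) • x + (B y x • A z - B (A z) x • y) + (B (A y) x • z - B z x • A y))
      + ((2 * B (A z) x) • y + (B z y • A x - B (A x) y • z) + (B (A z) y • x - B x y • A z))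
      = 0 := by
  intro x y z
  have e : ∀ a b : V, B (A a) b = - B (A b) a := by
    intro a b
    have := hskew a b
    rw [hsymm a (A b)] at this
    linear_combination this
  rw [e y x, e z y, e x z, hsymm y x, hsymm z y, hsymm x z]
  module
end

section
/- Let g_s be a complex simple Lie algebra with rank(g_s) ≥ 3, with Cartan decomposition g_s = t ⊕ ⊕_{α∈Φ} g_α. Suppose R ∈ K(ι(ℂ ⊕ g_s)) (the curvature space for the central extension of the adjoint representation), written R(x,y) = {x,y} − ω(x,y)Id with {x,y} ∈ g_s and ω a 2-form, so that the Bianchi identity reads [{x,y},z] + [{y,z},x] + [{z,x},y] = ω(x,y)z + ω(y,z)x + ω(z,x)y. If R is a weight element of weight ρ where ρ is a root, then: for all A₀, B₀ ∈ t, {A₀,B₀} = 0 and ω(A₀,·) = 0. -/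
open LieModule LieAlgebra Module

private lemma skew_of_alt {L M : Type*} [AddCommGroup L] [Module ℂ L]
    [AddCommGroup M] [Module ℂ M] (B : L →ₗ[ℂ] L →ₗ[ℂ] M)
    (h : ∀ x, B x x = 0) (x y : L) : B y x = -B x y := by
  have h2 := h (x + y)
  simp only [map_add, LinearMap.add_apply, h x, h y] at h2
  simp only [zero_add, add_zero] at h2
  exact eq_neg_of_add_eq_zero_left h2

private lemma exists_notMem_span {V : Type*} [AddCommGroup V] [Module ℂ V]
    [FiniteDimensional ℂ V] (p : Submodule ℂ V) (hp : 2 ≤ Module.finrank ℂ p)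
    (a : V) : ∃ b, b ∈ p ∧ b ∉ Submodule.span ℂ {a} := by
  by_contra hc
  push_neg at hc
  have hle : p ≤ Submodule.span ℂ {a} := fun b hb => hc b hb
  have h1 : Module.finrank ℂ p ≤ Module.finrank ℂ (Submodule.span ℂ {a}) :=
    Submodule.finrank_mono hle
  rcases eq_or_ne a 0 with rfl | ha
  · rw [Submodule.span_zero_singleton, finrank_bot] at h1
    omega
  · rw [finrank_span_singleton ha] at h1
    omega

private lemma killing_ne_zero_aux {L : Type*} [LieRing L] [LieAlgebra ℂ L]
    [FiniteDimensional ℂ L] [LieAlgebra.IsSimple ℂ L]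
    (H : LieSubalgebra ℂ L) [H.IsCartanSubalgebra]
    (ρ : H →ₗ[ℂ] ℂ) (hρ : ρ ≠ 0) (e : L) (he0 : e ≠ 0)
    (heρ : ∀ h : H, ⁅(h : L), e⁆ = ρ h • e)
    (hk : killingForm ℂ L = 0) : False := by
  classical
  -- `ρ` as a weight
  have hemem : e ∈ genWeightSpace L (fun h : H => ρ h) := by
    rw [mem_genWeightSpace]
    intro x
    refine ⟨1, ?_⟩
    rw [pow_one, LinearMap.sub_apply, LinearMap.smul_apply, Module.End.one_apply,
      toEnd_apply_apply, LieSubalgebra.coe_bracket_of_module, heρ x, sub_self]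
  have hne : genWeightSpace L (fun h : H => ρ h) ≠ ⊥ := by
    intro hbot
    rw [hbot, LieSubmodule.mem_bot] at hemem
    exact he0 hemem
  set ρw : Weight ℂ H L := ⟨fun h : H => ρ h, hne⟩ with hρwdef
  -- the trace form on `H` vanishes
  have htf : ∀ x y : H, LieModule.traceForm ℂ H L x y = 0 := by
    intro x y
    have h1 := LieAlgebra.restrict_killingForm (R := ℂ) (L := L) H
    rw [hk] at h1
    rw [← h1]
    rfl
  -- every weight vanishes on every coroot space
  have B2 : ∀ (α : Weight ℂ H L), α.IsNonZero → ∀ t : H,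
      t ∈ LieAlgebra.corootSpace (α : H → ℂ) → ∀ χ : Weight ℂ H L, χ t = 0 := by
    intro α hα t ht
    choose aa bb hbb hrel using fun χ : Weight ℂ H L =>
      LieModule.exists_forall_mem_corootSpace_smul_add_eq_zero L (α : H → ℂ) (χ : H → ℂ)
        hα χ.genWeightSpace_ne_bot
    have key : ∀ χ : Weight ℂ H L, (bb χ : ℂ) * χ t = -((aa χ : ℂ) * α t) := by
      intro χ
      have h2 := hrel χ t ht
      rw [Pi.add_apply, Pi.smul_apply, Pi.smul_apply, zsmul_eq_mul, zsmul_eq_mul] at h2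
      linear_combination h2
    have hα0 : α t = 0 := by
      by_contra hat
      have hQ : (0 : ℂ) = ∑ χ : Weight ℂ H L,
          finrank ℂ (genWeightSpace L (χ : H → ℂ)) • (χ t * χ t) := by
        rw [← LieModule.traceForm_eq_sum_finrank_nsmul_mul, htf]
      set q : Weight ℂ H L → ℚ := fun χ =>
        (finrank ℂ (genWeightSpace L (χ : H → ℂ)) : ℚ) * ((aa χ : ℚ) / (bb χ : ℚ))^2 with hqdef
      have hcast : ∀ χ : Weight ℂ H L,
          (finrank ℂ (genWeightSpace L (χ : H → ℂ)) • (χ t * χ t) : ℂ) = (q χ : ℂ) * (α t)^2 := by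
        intro χ
        have hb0 : (bb χ : ℂ) ≠ 0 := by exact_mod_cast (hbb χ).ne'
        have hχt : χ t = -((aa χ : ℂ) / (bb χ : ℂ)) * α t := by
          field_simp
          linear_combination key χ
        rw [hχt, hqdef]
        push_cast
        ring
      have hsum0 : ((∑ χ : Weight ℂ H L, q χ : ℚ) : ℂ) * (α t)^2 = 0 := by
        calc ((∑ χ : Weight ℂ H L, q χ : ℚ) : ℂ) * (α t)^2
            = ∑ χ : Weight ℂ H L, (q χ : ℂ) * (α t)^2 := by push_cast; rw [Finset.sum_mul]
          _ = ∑ χ : Weight ℂ H L,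
              (finrank ℂ (genWeightSpace L (χ : H → ℂ)) • (χ t * χ t) : ℂ) :=
              Finset.sum_congr rfl fun χ _ => (hcast χ).symm
          _ = 0 := hQ.symm
      have hsum : (∑ χ : Weight ℂ H L, q χ : ℚ) = 0 := by
        rcases mul_eq_zero.mp hsum0 with h | h
        · exact_mod_cast h
        · exact absurd (sq_eq_zero_iff.mp h) hat
      have hqα : q α = 0 :=
        (Finset.sum_eq_zero_iff_of_nonneg fun χ _ =>
          mul_nonneg (Nat.cast_nonneg _) (sq_nonneg _)).mp hsum α (Finset.mem_univ α)
      have hfr : (0 : ℚ) < (finrank ℂ (genWeightSpace L (α : H → ℂ)) : ℚ) := by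
        have hnt : Nontrivial (genWeightSpace L (α : H → ℂ)) :=
          (LieSubmodule.nontrivial_iff_ne_bot ℂ H _).mpr α.genWeightSpace_ne_bot
        exact_mod_cast finrank_pos (R := ℂ) (M := genWeightSpace L (α : H → ℂ))
      have haa : (aa α : ℚ) = 0 := by
        rcases mul_eq_zero.mp hqα with h | h
        · exact absurd h hfr.ne'
        · have hdiv := sq_eq_zero_iff.mp h
          have hb0 : (bb α : ℚ) ≠ 0 := by exact_mod_cast (hbb α).ne'
          rcases div_eq_zero_iff.mp hdiv with h' | h'
          · exact h'
          · exact absurd h' hb0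
      have haaℂ : (aa α : ℂ) = 0 := by exact_mod_cast haa
      have hb0 : (bb α : ℂ) ≠ 0 := by exact_mod_cast (hbb α).ne'
      have h3 := key α
      rw [haaℂ, zero_mul, neg_zero] at h3
      exact hat ((mul_eq_zero.mp h3).resolve_left hb0)
    intro χ
    have h2 := key χ
    rw [hα0, mul_zero, neg_zero] at h2
    have hb0 : (bb χ : ℂ) ≠ 0 := by exact_mod_cast (hbb χ).ne'
    exact (mul_eq_zero.mp h2).resolve_left hb0
  -- `ρ` kills brackets of `H`-elements
  have hρbr : ∀ x y : H, ρ ⁅x, y⁆ = 0 := by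
    intro x y
    have h1 : ⁅((⁅x, y⁆ : H) : L), e⁆ = ρ ⁅x, y⁆ • e := heρ _
    rw [LieSubalgebra.coe_bracket, lie_lie, heρ x, heρ y, lie_smul, lie_smul, heρ x, heρ y,
      smul_smul, smul_smul, mul_comm, sub_self] at h1
    have := h1.symm
    rw [smul_eq_zero] at this
    exact this.resolve_right he0
  -- an element of `H` on which `ρ` is `1`
  have hexh : ∃ h : H, ρ h ≠ 0 := by
    by_contra hc
    push_neg at hc
    exact hρ (by ext x; simpa using hc x)
  obtain ⟨h₁, hh₁⟩ := hexh
  set c₂ : H := (ρ h₁)⁻¹ • h₁ with hc₂def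
  have hc₂ : ρ c₂ = 1 := by
    rw [hc₂def, map_smul, smul_eq_mul, inv_mul_cancel₀ hh₁]
  -- the subspace `Z`
  set NZ : Submodule ℂ L := ⨆ (χ : Weight ℂ H L) (_ : χ.IsNonZero),
    (genWeightSpace L (χ : H → ℂ) : Submodule ℂ L) with hNZdef
  set Z : Submodule ℂ L := (LinearMap.ker ρ).map H.incl.toLinearMap ⊔ NZ with hZdef
  -- every bracket lies in `Z`
  have hZbr : ∀ x y : L, ⁅x, y⁆ ∈ Z := by
    have h1 : ∀ (χ ψ : H → ℂ), ∀ x ∈ genWeightSpace L χ, ∀ y ∈ genWeightSpace L ψ,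
        ⁅x, y⁆ ∈ Z := by
      intro χ ψ x hx y hy
      have hxy : ⁅x, y⁆ ∈ genWeightSpace L (χ + ψ) := by
        have := LieAlgebra.mapsTo_toEnd_genWeightSpace_add_of_mem_rootSpace ℂ L H L χ ψ hx hy
        rwa [toEnd_apply_apply] at this
      by_cases hχψ : χ + ψ = 0
      · by_cases hχ0 : χ = 0
        · have hψ0 : ψ = 0 := by rwa [hχ0, zero_add] at hχψ
          have hxH : x ∈ H := by
            rw [hχ0] at hx
            rwa [show genWeightSpace L (0 : H → ℂ) = rootSpace H 0 from rfl,
              rootSpace_zero_eq, LieSubalgebra.mem_toLieSubmodule] at hx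
          have hyH : y ∈ H := by
            rw [hψ0] at hy
            rwa [show genWeightSpace L (0 : H → ℂ) = rootSpace H 0 from rfl,
              rootSpace_zero_eq, LieSubalgebra.mem_toLieSubmodule] at hy
          have hmem : ⁅(⟨x, hxH⟩ : H), (⟨y, hyH⟩ : H)⁆ ∈ LinearMap.ker ρ := hρbr _ _
          exact Submodule.mem_sup_left ⟨⁅(⟨x, hxH⟩ : H), (⟨y, hyH⟩ : H)⁆, hmem, rfl⟩
        · by_cases hx0 : x = 0
          · rw [hx0, zero_lie]; exact Z.zero_mem
          have hχne : genWeightSpace L χ ≠ ⊥ := by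
            intro hbot; rw [hbot, LieSubmodule.mem_bot] at hx; exact hx0 hx
          set Wχ : Weight ℂ H L := ⟨χ, hχne⟩ with hWχ
          have hWnz : Wχ.IsNonZero := fun hz => hχ0 hz
          have hψeq : ψ = -χ := eq_neg_of_add_eq_zero_right hχψ
          have htH : ⁅x, y⁆ ∈ H := by
            rw [hχψ] at hxy
            rwa [show genWeightSpace L (0 : H → ℂ) = rootSpace H 0 from rfl,
              rootSpace_zero_eq, LieSubalgebra.mem_toLieSubmodule] at hxy
          have hco : (⟨⁅x, y⁆, htH⟩ : H) ∈ LieAlgebra.corootSpace (Wχ : H → ℂ) := by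
            rw [LieAlgebra.mem_corootSpace]
            refine Submodule.subset_span ?_
            refine ⟨x, hx, y, ?_, rfl⟩
            rw [hψeq] at hy
            exact hy
          have hρt : ρ ⟨⁅x, y⁆, htH⟩ = 0 := B2 Wχ hWnz _ hco ρw
          exact Submodule.mem_sup_left ⟨⟨⁅x, y⁆, htH⟩, hρt, rfl⟩
      · by_cases hxy0 : ⁅x, y⁆ = 0
        · rw [hxy0]; exact Z.zero_mem
        have hne2 : genWeightSpace L (χ + ψ) ≠ ⊥ := by
          intro hbot; rw [hbot, LieSubmodule.mem_bot] at hxy; exact hxy0 hxy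
        set W : Weight ℂ H L := ⟨χ + ψ, hne2⟩ with hWdef
        have hWnz : W.IsNonZero := fun hz => hχψ hz
        refine Submodule.mem_sup_right ?_
        have hle : (genWeightSpace L (W : H → ℂ) : Submodule ℂ L) ≤ NZ :=
          le_iSup₂ (f := fun (j : Weight ℂ H L) (_ : j.IsNonZero) =>
            (genWeightSpace L (j : H → ℂ) : Submodule ℂ L)) W hWnz
        exact hle ((LieSubmodule.mem_toSubmodule _).mpr hxy)
    intro x y
    have hx : x ∈ (⊤ : LieSubmodule ℂ H L) := by simp
    rw [← iSup_genWeightSpace_eq_top ℂ H L] at hx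
    induction hx using LieSubmodule.iSup_induction' with
    | mem χ x hx =>
      have hy : y ∈ (⊤ : LieSubmodule ℂ H L) := by simp
      rw [← iSup_genWeightSpace_eq_top ℂ H L] at hy
      induction hy using LieSubmodule.iSup_induction' with
      | mem ψ y hy => exact h1 χ ψ x hx y hy
      | zero => rw [lie_zero]; exact Z.zero_mem
      | add u v _ _ hu hv => rw [lie_add]; exact Z.add_mem hu hv
    | zero => rw [zero_lie]; exact Z.zero_mem
    | add u v _ _ hu hv => rw [add_lie]; exact Z.add_mem hu hv
  -- `L` is perfect
  have hperf : (⊤ : LieIdeal ℂ L) = ⁅(⊤ : LieIdeal ℂ L), (⊤ : LieIdeal ℂ L)⁆ := by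
    rcases LieAlgebra.IsSimple.eq_bot_or_eq_top
      ⁅(⊤ : LieIdeal ℂ L), (⊤ : LieIdeal ℂ L)⁆ with h | h
    · exfalso
      refine LieAlgebra.IsSimple.non_abelian (R := ℂ) (L := L) ⟨fun x y => ?_⟩
      have hmem : ⁅x, y⁆ ∈ ⁅(⊤ : LieIdeal ℂ L), (⊤ : LieIdeal ℂ L)⁆ :=
        LieSubmodule.lie_mem_lie (by simp) (by simp)
      rw [h] at hmem
      exact (LieSubmodule.mem_bot _).mp hmem
    · exact h.symm
  -- hence everything lies in `Z`
  have htop : (⊤ : Submodule ℂ L) ≤ Z := by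
    intro z _
    have hz : z ∈ (⁅(⊤ : LieIdeal ℂ L), (⊤ : LieIdeal ℂ L)⁆ : LieIdeal ℂ L) := by
      rw [← hperf]; simp
    rw [← LieSubmodule.mem_toSubmodule, LieSubmodule.lieIdeal_oper_eq_linear_span'] at hz
    refine Submodule.span_le.mpr ?_ hz
    rintro - ⟨u, -, v, -, rfl⟩
    exact hZbr u v
  -- disjointness of the zero weight space from the nonzero ones
  have hdisj : Disjoint ((genWeightSpace L (0 : H → ℂ) : Submodule ℂ L)) NZ := by
    have hG0ne : genWeightSpace L (0 : H → ℂ) ≠ ⊥ := by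
      intro hbot
      have hc₂mem : (c₂ : L) ∈ genWeightSpace L (0 : H → ℂ) := by
        rw [show genWeightSpace L (0 : H → ℂ) = rootSpace H 0 from rfl,
          rootSpace_zero_eq, LieSubalgebra.mem_toLieSubmodule]
        exact c₂.2
      rw [hbot, LieSubmodule.mem_bot] at hc₂mem
      have hc0 : c₂ = 0 := Subtype.coe_injective (by simpa using hc₂mem)
      rw [hc0, map_zero] at hc₂
      exact one_ne_zero hc₂.symm
    set W0 : Weight ℂ H L := ⟨0, hG0ne⟩ with hW0def
    have hind := (LieSubmodule.iSupIndep_toSubmodule).mpr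
      (LieModule.iSupIndep_genWeightSpace' ℂ H L)
    have hd := hind W0
    refine Disjoint.mono (le_of_eq rfl) ?_ hd
    refine iSup₂_le fun χ hχ => ?_
    have hne' : χ ≠ W0 := by
      intro hEq
      exact hχ (by rw [hEq]; rfl)
    exact le_iSup₂ (f := fun (j : Weight ℂ H L) (_ : j ≠ W0) =>
      (genWeightSpace L (j : H → ℂ) : Submodule ℂ L)) χ hne'
  -- extract the contradiction
  have hc₂Z : (c₂ : L) ∈ Z := htop Submodule.mem_top
  rw [hZdef, Submodule.mem_sup] at hc₂Z
  obtain ⟨u, hu, v, hv, huv⟩ := hc₂Z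
  obtain ⟨k, hk', rfl⟩ := hu
  have hkρ : ρ k = 0 := hk'
  have hvH : v ∈ (genWeightSpace L (0 : H → ℂ) : Submodule ℂ L) := by
    have hvL : v = ((c₂ - k : H) : L) := by
      have : (H.incl.toLinearMap k) = (k : L) := rfl
      rw [AddSubgroupClass.coe_sub]
      rw [this] at huv
      exact (eq_sub_of_add_eq' huv).symm ▸ rfl
    rw [hvL]
    have : ((c₂ - k : H) : L) ∈ genWeightSpace L (0 : H → ℂ) := by
      rw [show genWeightSpace L (0 : H → ℂ) = rootSpace H 0 from rfl,
        rootSpace_zero_eq, LieSubalgebra.mem_toLieSubmodule]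
      exact (c₂ - k).2
    exact this
  have hv0 : v = 0 := by
    have := hdisj.le_bot (Submodule.mem_inf.mpr ⟨hvH, hv⟩)
    simpa using this
  rw [hv0, add_zero] at huv
  have hkc : k = c₂ := by
    apply Subtype.coe_injective
    exact huv
  rw [hkc, hc₂] at hkρ
  exact one_ne_zero hkρ


/-- Step 1 of the proof of Proposition 6.1: let `L` be a complex simple
Lie algebra of rank ≥ 3 with Cartan subalgebra `H`, and let `R ∈ K(ℂ·Id ⊕ ad(L))` be a
formal curvature map, written `R(x,y) = {x,y} − ω(x,y)·Id` (so the Bianchi identity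
reads `[{x,y},z] + [{y,z},x] + [{z,x},y] = ω(x,y)z + ω(y,z)x + ω(z,x)y`), which is a
weight element of weight `ρ`, where `ρ` is a root.  Then `{A₀,B₀} = 0` and
`ω(A₀,·) = 0` for all `A₀, B₀ ∈ H`. -/
theorem adjoint_curvature_vanishes_on_cartan
    {L : Type*} [LieRing L] [LieAlgebra ℂ L] [FiniteDimensional ℂ L]
    [LieAlgebra.IsSimple ℂ L]
    (H : LieSubalgebra ℂ L) [H.IsCartanSubalgebra]
    (hrank : 3 ≤ Module.finrank ℂ H)
    (br : L →ₗ[ℂ] L →ₗ[ℂ] L) (om : L →ₗ[ℂ] L →ₗ[ℂ] ℂ)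
    (hbralt : ∀ x : L, br x x = 0) (homalt : ∀ x : L, om x x = 0)
    (hbianchi : ∀ x y z : L,
      ⁅br x y, z⁆ + ⁅br y z, x⁆ + ⁅br z x, y⁆ = om x y • z + om y z • x + om z x • y)
    (ρ : H →ₗ[ℂ] ℂ) (hρ : ρ ≠ 0)
    (hroot : ∃ e : L, e ≠ 0 ∧ ∀ h : H, ⁅(h : L), e⁆ = ρ h • e)
    (hweight_br : ∀ (h : H) (x y : L),
      ⁅(h : L), br x y⁆ - br ⁅(h : L), x⁆ y - br x ⁅(h : L), y⁆ = ρ h • br x y)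
    (hweight_om : ∀ (h : H) (x y : L),
      om ⁅(h : L), x⁆ y + om x ⁅(h : L), y⁆ = -(ρ h * om x y)) :
    ∀ a b : H, br (a : L) (b : L) = 0 ∧ ∀ x : L, om (a : L) x = 0 := by
  classical
  obtain ⟨e, he0, heρ⟩ := hroot
  have hbrskew : ∀ x y : L, br y x = -br x y := skew_of_alt br hbralt
  have homskew : ∀ x y : L, om y x = -om x y := skew_of_alt om homalt
  -- the Killing form is nondegenerate
  have hKill : LieAlgebra.IsKilling ℂ L := by
    rcases LieAlgebra.IsSimple.eq_bot_or_eq_top (LieIdeal.killingCompl ℂ L ⊤) with hK | hK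
    · exact ⟨hK⟩
    · exfalso
      refine killing_ne_zero_aux H ρ hρ e he0 heρ ?_
      have h1 := LieIdeal.coe_killingCompl_top ℂ L
      rw [hK] at h1
      apply LinearMap.ker_eq_top.mp
      rw [← h1]
      simp
  haveI := hKill
  have hab : ∀ x y : H, ⁅(x : L), (y : L)⁆ = 0 := by
    intro x y
    rw [← LieSubalgebra.coe_bracket, trivial_lie_zero, ZeroMemClass.coe_zero]
  have hcoe : ∀ z : H, (z : L) = H.incl.toLinearMap z := fun z => rfl
  -- an element on which ρ is 1
  have hexh : ∃ h : H, ρ h ≠ 0 := by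
    by_contra hc
    push_neg at hc
    exact hρ (by ext x; simpa using hc x)
  obtain ⟨h₁, hh₁⟩ := hexh
  set c₂ : H := (ρ h₁)⁻¹ • h₁ with hc₂def
  have hc₂ : ρ c₂ = 1 := by
    rw [hc₂def, map_smul, smul_eq_mul, inv_mul_cancel₀ hh₁]
  -- ω vanishes on H × H
  have homH : ∀ a b : H, om (a : L) (b : L) = 0 := by
    intro a b
    have h2 := hweight_om c₂ (a : L) (b : L)
    rw [hab c₂ a, hab c₂ b, map_zero, LinearMap.zero_apply, map_zero, hc₂, one_mul,
      add_zero] at h2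
    rw [← neg_eq_zero]
    exact h2.symm
  -- brackets of H with curvature values
  have hbrw : ∀ a b h : H, ⁅(h : L), br ↑a ↑b⁆ = ρ h • br ↑a ↑b := by
    intro a b h
    have h2 := hweight_br h ↑a ↑b
    rw [hab h a, hab h b, map_zero, LinearMap.zero_apply, map_zero, sub_zero, sub_zero] at h2
    exact h2
  set ρf : H → ℂ := fun h : H => ρ h with hρfdef
  have hρwmem : ∀ x : L, (∀ h : H, ⁅(h : L), x⁆ = ρ h • x) → x ∈ genWeightSpace L ρf := by
    intro x hx
    rw [mem_genWeightSpace]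
    intro h
    refine ⟨1, ?_⟩
    rw [pow_one, LinearMap.sub_apply, LinearMap.smul_apply, Module.End.one_apply,
      toEnd_apply_apply, LieSubalgebra.coe_bracket_of_module, hx h, sub_self]
  have hbrmem : ∀ a b : H, br ↑a ↑b ∈ genWeightSpace L ρf :=
    fun a b => hρwmem _ (fun h => hbrw a b h)
  have hemem : e ∈ genWeightSpace L ρf := hρwmem e heρ
  have hne : genWeightSpace L ρf ≠ ⊥ := by
    intro hbot
    rw [hbot, LieSubmodule.mem_bot] at hemem
    exact he0 hemem
  set ρw : Weight ℂ H L := ⟨ρf, hne⟩ with hρwdef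
  have hρwnz : ρw.IsNonZero := by
    intro hz
    apply hρ
    ext x
    exact congrFun hz x
  -- the cyclic identity on H
  have hBH : ∀ a b c : H, ρ c • br ↑a ↑b + ρ a • br ↑b ↑c + ρ b • br ↑c ↑a = 0 := by
    intro a b c
    have h2 := hbianchi ↑a ↑b ↑c
    rw [homH a b, homH b c, homH c a, zero_smul, zero_smul, zero_smul, add_zero, add_zero] at h2
    have e1 : ⁅br ↑a ↑b, (c : L)⁆ = -(ρ c • br ↑a ↑b) := by
      rw [← lie_skew, hbrw a b c]
    have e2 : ⁅br ↑b ↑c, (a : L)⁆ = -(ρ a • br ↑b ↑c) := by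
      rw [← lie_skew, hbrw b c a]
    have e3 : ⁅br ↑c ↑a, (b : L)⁆ = -(ρ b • br ↑c ↑a) := by
      rw [← lie_skew, hbrw c a b]
    rw [e1, e2, e3, ← neg_add, ← neg_add, neg_eq_zero] at h2
    exact h2
  have hker2 : ∀ a b : H, ρ a = 0 → ρ b = 0 → br ↑a ↑b = 0 := by
    intro a b ha hb
    have h2 := hBH a b c₂
    rw [hc₂, ha, hb, one_smul, zero_smul, zero_smul, add_zero, add_zero] at h2
    exact h2
  -- facts about the (-ρ) root space
  have hfe : ∀ f ∈ genWeightSpace L (-ρf), ∀ h : H, ⁅(h : L), f⁆ = -(ρ h) • f := by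
    intro f hf h
    have h2 := LieAlgebra.IsKilling.lie_eq_smul_of_mem_rootSpace (α := -ρf) hf h
    rw [LieSubalgebra.coe_bracket_of_module] at h2
    simpa using h2
  have hbrfH : ∀ (b : H), ∀ f ∈ genWeightSpace L (-ρf), br ↑b f ∈ H := by
    intro b f hf
    have hz : ∀ h : H, ⁅(h : L), br ↑b f⁆ = 0 := by
      intro h
      have h2 := hweight_br h ↑b f
      rw [hab h b, map_zero, LinearMap.zero_apply, sub_zero, hfe f hf h, map_smul,
        neg_smul, sub_neg_eq_add] at h2
      have h4 : ⁅(h : L), br ↑b f⁆ + ρ h • br ↑b f = 0 + ρ h • br ↑b f := by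
        rw [zero_add]
        rw [add_comm] at h2
        rw [add_comm]
        exact h2
      exact add_right_cancel h4
    have hmem : br ↑b f ∈ genWeightSpace L (0 : H → ℂ) := by
      rw [mem_genWeightSpace]
      intro x
      refine ⟨1, ?_⟩
      rw [pow_one, LinearMap.sub_apply, LinearMap.smul_apply, Module.End.one_apply,
        toEnd_apply_apply, LieSubalgebra.coe_bracket_of_module, hz x]
      simp
    rwa [show genWeightSpace L (0 : H → ℂ) = rootSpace H 0 from rfl, rootSpace_zero_eq,
      LieSubalgebra.mem_toLieSubmodule] at hmem
  -- the key identity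
  have hKEY : ∀ (a b : H), ∀ f ∈ genWeightSpace L (-ρf),
      ⁅br ↑a ↑b, f⁆ = om ↑b f • (a : L) - om ↑a f • (b : L) := by
    intro a b f hf
    have h2 := hbianchi ↑a ↑b f
    rw [homH a b, zero_smul, zero_add] at h2
    have e2 : ⁅br ↑b f, (a : L)⁆ = 0 := hab ⟨br ↑b f, hbrfH b f hf⟩ a
    have e3 : ⁅br f ↑a, (b : L)⁆ = 0 := by
      rw [hbrskew ↑a f, neg_lie, show ⁅br ↑a f, (b : L)⁆ = 0 from hab ⟨br ↑a f, hbrfH a f hf⟩ b,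
        neg_zero]
    rw [e2, e3, add_zero, add_zero] at h2
    rw [h2, homskew ↑a f, neg_smul, ← sub_eq_add_neg]
  -- kernel of ρ has dimension ≥ 2
  have hker2dim : 2 ≤ Module.finrank ℂ (LinearMap.ker ρ) := by
    have h1 := LinearMap.finrank_range_add_finrank_ker ρ
    have h2 : Module.finrank ℂ (LinearMap.range ρ) ≤ 1 := by
      have h3 := Submodule.finrank_le (LinearMap.range ρ)
      simpa using h3
    omega
  -- ω vanishes on (ker ρ) × g₋ρ
  have homker : ∀ (a : H), ρ a = 0 → ∀ f ∈ genWeightSpace L (-ρf), om ↑a f = 0 := by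
    intro a ha f hf
    rcases eq_or_ne a 0 with rfl | ha0
    · simp
    obtain ⟨b, hbker, hbspan⟩ := exists_notMem_span (LinearMap.ker ρ) hker2dim a
    have hb : ρ b = 0 := hbker
    have h2 := hKEY a b f hf
    rw [hker2 a b ha hb, zero_lie] at h2
    have h3 : om ↑b f • a - om ↑a f • b = (0 : H) := by
      apply Subtype.coe_injective
      show ((om ↑b f • a - om ↑a f • b : H) : L) = ((0 : H) : L)
      simp only [hcoe, map_sub, map_smul, map_zero]
      simp only [← hcoe]
      exact h2.symm
    by_contra hom0
    apply hbspan
    have h4 : om ↑b f • a = om ↑a f • b := sub_eq_zero.mp h3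
    have h5 : b = (om ↑a f)⁻¹ • (om ↑b f • a) := by
      rw [h4, inv_smul_smul₀ hom0]
    rw [h5]
    exact Submodule.smul_mem _ _ (Submodule.smul_mem _ _ (Submodule.mem_span_singleton_self a))
  -- nonvanishing of ρ on the dual coroot
  have hρu : ρ ((LieAlgebra.IsKilling.cartanEquivDual H).symm ↑ρw) ≠ 0 :=
    LieAlgebra.IsKilling.root_apply_cartanEquivDual_symm_ne_zero hρwnz
  -- first vanishing result for br
  have hbr1 : ∀ (a b : H), ρ b = 0 → br ↑a ↑b = 0 := by
    intro a b hb
    have hwmem : br ↑a ↑b ∈ genWeightSpace L ρf := hbrmem a b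
    have hκ : ∀ f ∈ rootSpace H (-ρf), killingForm ℂ L (br ↑a ↑b) f = 0 := by
      intro f hf
      have hlie := LieAlgebra.IsKilling.lie_eq_killingForm_smul_of_mem_rootSpace_of_mem_rootSpace_neg
        (α := ρw) hwmem hf
      have h2 := hKEY a b f hf
      rw [homker b hb f hf, zero_smul, zero_sub] at h2
      rw [h2] at hlie
      have h3 : killingForm ℂ L (br ↑a ↑b) f • ((LieAlgebra.IsKilling.cartanEquivDual H).symm ↑ρw)
          + om ↑a f • b = (0 : H) := by
        apply Subtype.coe_injective
        show ((_ : H) : L) = ((0 : H) : L)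
        simp only [hcoe, map_add, map_smul, map_zero]
        simp only [← hcoe]
        rw [← hlie, neg_add_cancel]
      have h4 := congrArg ρ h3
      rw [map_add, map_smul, map_smul, hb, smul_zero, add_zero, map_zero, smul_eq_mul] at h4
      exact (mul_eq_zero.mp h4).resolve_right hρu
    have hker := LieAlgebra.mem_ker_killingForm_of_mem_rootSpace_of_forall_rootSpace_neg
      (K := ℂ) (L := L) (H := H) (α := ρf) hwmem hκ
    rw [LieAlgebra.IsKilling.ker_killingForm_eq_bot] at hker
    simpa using hker
  -- br vanishes on H × H
  have hbr0 : ∀ a b : H, br ↑a ↑b = 0 := by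
    intro a b
    have hb₀ : ρ (b - ρ b • c₂) = 0 := by
      rw [map_sub, map_smul, hc₂, smul_eq_mul, mul_one, sub_self]
    have ha₀ : ρ (a - ρ a • c₂) = 0 := by
      rw [map_sub, map_smul, hc₂, smul_eq_mul, mul_one, sub_self]
    have hbeq : (b : L) = ((b - ρ b • c₂ : H) : L) + ρ b • (c₂ : L) := by
      simp only [hcoe, map_sub, map_smul]
      module
    have haeq : (a : L) = ((a - ρ a • c₂ : H) : L) + ρ a • (c₂ : L) := by
      simp only [hcoe, map_sub, map_smul]
      module
    calc br ↑a ↑b = br ↑a (((b - ρ b • c₂ : H) : L) + ρ b • (c₂ : L)) := by rw [← hbeq]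
      _ = br ↑a ((b - ρ b • c₂ : H) : L) + ρ b • br ↑a (c₂ : L) := by
          rw [map_add, map_smul]
      _ = ρ b • br ↑a (c₂ : L) := by rw [hbr1 a _ hb₀, zero_add]
      _ = ρ b • -(br (c₂ : L) ↑a) := by rw [← hbrskew]
      _ = 0 := by
          rw [show br (c₂ : L) ↑a = 0 from ?_, neg_zero, smul_zero]
          calc br (c₂ : L) ↑a
              = br ↑c₂ (((a - ρ a • c₂ : H) : L) + ρ a • (c₂ : L)) := by rw [← haeq]
            _ = br ↑c₂ ((a - ρ a • c₂ : H) : L) + ρ a • br ↑c₂ (c₂ : L) := by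
                rw [map_add, map_smul]
            _ = 0 := by rw [hbr1 c₂ _ ha₀, hbralt, smul_zero, add_zero]
  -- ω vanishes on H × L
  have hom0 : ∀ (a : H) (x : L), om ↑a x = 0 := by
    intro a
    rcases eq_or_ne (a : L) 0 with ha0 | ha0
    · intro x; rw [ha0, map_zero, LinearMap.zero_apply]
    have hwt : ∀ (χ : H → ℂ), ∀ x ∈ genWeightSpace L χ, om ↑a x = 0 := by
      intro χ x hx
      by_cases hχ : ∀ h : H, χ h = -(ρ h)
      · have hχeq : χ = -ρf := by
          ext h; exact hχ h
        rw [hχeq] at hx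
        have haH0 : a ≠ 0 := fun h => ha0 (by rw [h, ZeroMemClass.coe_zero])
        obtain ⟨b, -, hbspan⟩ := exists_notMem_span (⊤ : Submodule ℂ H)
          (by simpa using hrank.trans' (by norm_num)) a
        have h2 := hKEY a b x hx
        rw [hbr0 a b, zero_lie] at h2
        have h3 : om ↑b x • a - om ↑a x • b = (0 : H) := by
          apply Subtype.coe_injective
          show ((om ↑b x • a - om ↑a x • b : H) : L) = ((0 : H) : L)
          simp only [hcoe, map_sub, map_smul, map_zero]
          simp only [← hcoe]
          exact h2.symm
        by_contra hom0'
        apply hbspan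
        have h4 : om ↑b x • a = om ↑a x • b := sub_eq_zero.mp h3
        have h5 : b = (om ↑a x)⁻¹ • (om ↑b x • a) := by
          rw [h4, inv_smul_smul₀ hom0']
        rw [h5]
        exact Submodule.smul_mem _ _ (Submodule.smul_mem _ _ (Submodule.mem_span_singleton_self a))
      · push_neg at hχ
        obtain ⟨h₀, hh₀⟩ := hχ
        have hlie : ⁅(h₀ : L), x⁆ = χ h₀ • x := by
          have h2 := LieAlgebra.IsKilling.lie_eq_smul_of_mem_rootSpace (α := χ) hx h₀
          rw [LieSubalgebra.coe_bracket_of_module] at h2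
          exact h2
        have h2 := hweight_om h₀ ↑a x
        rw [hab h₀ a, map_zero, LinearMap.zero_apply, zero_add, hlie, map_smul,
          smul_eq_mul] at h2
        have h3 : (χ h₀ + ρ h₀) * om ↑a x = 0 := by ring_nf; linear_combination h2
        rcases mul_eq_zero.mp h3 with h4 | h4
        · exact absurd (by linear_combination h4) hh₀
        · exact h4
    intro x
    have hx : x ∈ (⊤ : LieSubmodule ℂ H L) := by simp
    rw [← iSup_genWeightSpace_eq_top ℂ H L] at hx
    induction hx using LieSubmodule.iSup_induction' with
    | mem χ y hy => exact hwt χ y hy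
    | zero => rw [map_zero]
    | add u v _ _ hu hv => rw [map_add, hu, hv, add_zero]
  exact fun a b => ⟨hbr0 a b, hom0 a⟩
end

section
/- Let g be a complex semisimple Lie algebra acting on a vector space V, with Cartan subalgebra t, and suppose g ⊆ gl(V) satisfies: whenever R ∈ K(g) is a weight element of weight ρ with respect to t, and x₀, x₁ are weight vectors of extremal weights, then R(x₀,x₁) = 0. Suppose also that R(x₀, x) = 0 for every extremal weight vector x₀ and every x ∈ V. Then R(x,y)x₀ = 0 for all extremal weight vectors x₀ and all x,y ∈ V; consequently, if the extremal weight vectors span V (which holds when V is irreducible), R = 0. -/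
attribute [local instance 100] LieRing.ofAssociativeRing

/-- from the proof of Lemma 6.3: let `E ⊆ V` be the set of extremal
weight vectors of the irreducible representation of `𝔤` on `V`, and let `R ∈ K(𝔤)`.
If `R(x₀,·) = 0` for every extremal weight vector `x₀ ∈ E`, then `R(x,y)x₀ = 0` for
all `x,y ∈ V` and `x₀ ∈ E`; consequently, if the extremal weight vectors span `V`
(which holds when `V` is irreducible), then `R = 0`. -/
theorem curvature_vanishes_from_extremal_annihilation
    {V : Type*} [AddCommGroup V] [Module ℂ V] [FiniteDimensional ℂ V]
    (g : LieSubalgebra ℂ (Module.End ℂ V))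
    (E : Set V)
    (R : V →ₗ[ℂ] V →ₗ[ℂ] Module.End ℂ V)
    (hmem : ∀ x y : V, R x y ∈ g)
    (haltR : ∀ x : V, R x x = 0)
    (hbianchi : ∀ x y z : V, R x y z + R y z x + R z x y = 0)
    (hzero : ∀ x₀ ∈ E, ∀ x : V, R x₀ x = 0) :
    (∀ x y : V, ∀ x₀ ∈ E, R x y x₀ = 0) ∧
      (Submodule.span ℂ E = ⊤ → R = 0) := by
  have hskew : ∀ x y : V, R x y = - R y x := by
    intro x y
    have h := haltR (x + y)
    simp only [map_add, LinearMap.add_apply, haltR] at h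
    have h2 : R x y + R y x = 0 := by
      rw [zero_add, add_zero] at h
      rw [add_comm]; exact h
    exact eq_neg_of_add_eq_zero_left h2
  have hmain : ∀ x y : V, ∀ x₀ ∈ E, R x y x₀ = 0 := by
    intro x y x₀ hx₀
    have h := hbianchi x₀ x y
    rw [hzero x₀ hx₀ x, hskew y x₀, hzero x₀ hx₀ y] at h
    simpa using h
  refine ⟨hmain, fun hspan => ?_⟩
  ext x y v
  have hv : v ∈ Submodule.span ℂ E := hspan ▸ Submodule.mem_top
  induction hv using Submodule.span_induction with
  | mem z hz => exact hmain x y z hz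
  | zero => simp
  | add a b _ _ ha hb => simp [map_add, ha, hb]
  | smul c a _ ha => simp [map_smul, ha]
end

section
/- Let V = ℂ² ⊗ ℂⁿ with n ≥ 3 and let g = ℂ·Id ⊕ sl(2,ℂ) ⊕ so(n,ℂ) acting by A ⊗ Id + Id ⊗ B. Every R ∈ K(g) of the form described by formula (30) — parameterized by S ∈ Λ²(ℂⁿ)* and Φ ∈ ⊙²(ℂ²)* — satisfies the full trace condition: the contraction R(x,y) evaluated as an endomorphism has vanishing trace-part coefficient, i.e., the component of R in ℂ·Id ⊗ Λ²V* vanishes: tr(R(x,y)) = 0 for all x,y ∈ V. Hence K(ℂ·Id ⊕ sl(2,ℂ) ⊕ so(n,ℂ)) = K(sl(2,ℂ) ⊕ so(n,ℂ)). -/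
open TensorProduct

namespace SegreTraceAux

noncomputable def eps : LinearMap.BilinForm ℂ (Fin 2 → ℂ) :=
  LinearMap.mk₂ ℂ (fun u v => u 0 * v 1 - u 1 * v 0)
    (fun u u' v => by simp; ring) (fun c u v => by simp; ring)
    (fun u v v' => by simp; ring) (fun c u v => by simp; ring)

noncomputable def gf (n : ℕ) : LinearMap.BilinForm ℂ (Fin n → ℂ) :=
  LinearMap.mk₂ ℂ (fun u v => ∑ i, u i * v i)
    (fun u u' v => by simp [add_mul, Finset.sum_add_distrib])
    (fun c u v => by simp [Finset.mul_sum, mul_assoc])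
    (fun u v v' => by simp [mul_add, Finset.sum_add_distrib])
    (fun c u v => by simp [Finset.mul_sum]; exact Finset.sum_congr rfl fun i _ => by ring)

noncomputable def om (n : ℕ) :
    ((Fin 2 → ℂ) ⊗[ℂ] (Fin n → ℂ)) →ₗ[ℂ] ((Fin 2 → ℂ) ⊗[ℂ] (Fin n → ℂ)) →ₗ[ℂ] ℂ :=
  LinearMap.BilinForm.tmul eps (gf n)

theorem om_tmul (n : ℕ) (u u' : Fin 2 → ℂ) (v v' : Fin n → ℂ) :
    om n (u ⊗ₜ v) (u' ⊗ₜ v') = gf n v v' * eps u u' := by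
  simp [om, smul_eq_mul]

theorem gf_basis (n : ℕ) (i j : Fin n) :
    gf n (Pi.single i 1) (Pi.single j 1) = if i = j then 1 else 0 := by
  simp [gf, Pi.single_apply, ite_and, eq_comm]

theorem gf_comm (n : ℕ) (v v' : Fin n → ℂ) : gf n v v' = gf n v' v := by
  simp [gf, mul_comm]

theorem eps_traceless (A : Module.End ℂ (Fin 2 → ℂ))
    (hA : LinearMap.trace ℂ (Fin 2 → ℂ) A = 0) (u u' : Fin 2 → ℂ) :
    eps (A u) u' = eps (A u') u := by
  have htr : A (Pi.single 0 1) 0 + A (Pi.single 1 1) 1 = 0 := by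
    have h := LinearMap.trace_eq_matrix_trace ℂ (Pi.basisFun ℂ (Fin 2)) A
    rw [hA] at h
    rw [Matrix.trace] at h
    simp [Matrix.diag, LinearMap.toMatrix_apply, Fin.sum_univ_two] at h
    linear_combination -h
  have hrep : ∀ w : Fin 2 → ℂ, A w = w 0 • A (Pi.single 0 1) + w 1 • A (Pi.single 1 1) := by
    intro w
    have hw : w = w 0 • (Pi.single 0 1 : Fin 2 → ℂ) + w 1 • (Pi.single 1 1 : Fin 2 → ℂ) := by
      funext i; fin_cases i <;> simp
    conv_lhs => rw [hw]
    simp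
  rw [show eps (A u) u' = (A u) 0 * u' 1 - (A u) 1 * u' 0 from rfl,
      show eps (A u') u = (A u') 0 * u 1 - (A u') 1 * u 0 from rfl,
      hrep u, hrep u']
  simp only [Pi.add_apply, Pi.smul_apply, smul_eq_mul]
  linear_combination (u 0 * u' 1 - u 1 * u' 0) * htr

theorem eps_antisym (u u' : Fin 2 → ℂ) : eps u u' = - eps u' u := by
  simp [eps]; ring

theorem gf_skew {n : ℕ} (B : Module.End ℂ (Fin n → ℂ))
    (hB : ∀ u v : Fin n → ℂ, (∑ i, B u i * v i) + (∑ i, u i * B v i) = 0)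
    (v v' : Fin n → ℂ) : gf n (B v) v' = - gf n (B v') v := by
  have h := hB v v'
  have h2 : (∑ i, B v' i * v i) = ∑ i, v i * B v' i :=
    Finset.sum_congr rfl fun i _ => mul_comm _ _
  simp only [gf, LinearMap.mk₂_apply]
  linear_combination h + h2

theorem traceB_zero {n : ℕ} (B : Module.End ℂ (Fin n → ℂ))
    (hB : ∀ u v : Fin n → ℂ, (∑ i, B u i * v i) + (∑ i, u i * B v i) = 0) :
    LinearMap.trace ℂ (Fin n → ℂ) B = 0 := by
  rw [LinearMap.trace_eq_matrix_trace ℂ (Pi.basisFun ℂ (Fin n)) B, Matrix.trace]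
  have hd : ∀ i : Fin n, B (Pi.single i 1) i = 0 := by
    intro i
    have h := hB (Pi.single i 1) (Pi.single i 1)
    simp [Pi.single_apply, mul_ite, ite_mul, Finset.sum_ite_eq'] at h
    linear_combination h
  simp [Matrix.diag, LinearMap.toMatrix_apply, hd]

theorem om_sym_ext {n : ℕ} (T : Module.End ℂ ((Fin 2 → ℂ) ⊗[ℂ] (Fin n → ℂ)))
    (h : ∀ (u : Fin 2 → ℂ) (v : Fin n → ℂ) (u' : Fin 2 → ℂ) (v' : Fin n → ℂ),
      om n (T (u ⊗ₜ v)) (u' ⊗ₜ v') = om n (T (u' ⊗ₜ v')) (u ⊗ₜ v)) :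
    ∀ z w, om n (T z) w = om n (T w) z := by
  intro z w
  induction z using TensorProduct.induction_on with
  | zero => simp
  | tmul u v =>
    induction w using TensorProduct.induction_on with
    | zero => simp
    | tmul u' v' => exact h u v u' v'
    | add w1 w2 h1 h2 => simp only [map_add, LinearMap.add_apply, h1, h2]
  | add z1 z2 h1 h2 => simp only [map_add, LinearMap.add_apply, h1, h2]

theorem om_sym_rTensor {n : ℕ} (A : Module.End ℂ (Fin 2 → ℂ))
    (hA : LinearMap.trace ℂ (Fin 2 → ℂ) A = 0) :
    ∀ z w, om n (LinearMap.rTensor (Fin n → ℂ) A z) w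
      = om n (LinearMap.rTensor (Fin n → ℂ) A w) z :=
  om_sym_ext _ fun u v u' v' => by
    rw [LinearMap.rTensor_tmul, LinearMap.rTensor_tmul, om_tmul, om_tmul,
        eps_traceless A hA u u', gf_comm]

theorem om_sym_lTensor {n : ℕ} (B : Module.End ℂ (Fin n → ℂ))
    (hB : ∀ u v : Fin n → ℂ, (∑ i, B u i * v i) + (∑ i, u i * B v i) = 0) :
    ∀ z w, om n (LinearMap.lTensor (Fin 2 → ℂ) B z) w
      = om n (LinearMap.lTensor (Fin 2 → ℂ) B w) z :=
  om_sym_ext _ fun u v u' v' => by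
    rw [LinearMap.lTensor_tmul, LinearMap.lTensor_tmul, om_tmul, om_tmul,
        gf_skew B hB v v', eps_antisym u u']
    ring

theorem trace_formula {n : ℕ} (a : ℂ) (A : Module.End ℂ (Fin 2 → ℂ))
    (B : Module.End ℂ (Fin n → ℂ))
    (hA : LinearMap.trace ℂ (Fin 2 → ℂ) A = 0)
    (hB : ∀ u v : Fin n → ℂ, (∑ i, B u i * v i) + (∑ i, u i * B v i) = 0) :
    LinearMap.trace ℂ ((Fin 2 → ℂ) ⊗[ℂ] (Fin n → ℂ))
      (a • (1 : Module.End ℂ ((Fin 2 → ℂ) ⊗[ℂ] (Fin n → ℂ)))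
        + LinearMap.rTensor (Fin n → ℂ) A + LinearMap.lTensor (Fin 2 → ℂ) B)
      = a * (2 * n) := by
  have h1 : LinearMap.trace ℂ _ (LinearMap.rTensor (Fin n → ℂ) A) = 0 := by
    rw [show LinearMap.rTensor (Fin n → ℂ) A = TensorProduct.map A LinearMap.id from rfl,
        LinearMap.trace_tensorProduct', hA, zero_mul]
  have h2 : LinearMap.trace ℂ _ (LinearMap.lTensor (Fin 2 → ℂ) B) = 0 := by
    rw [show LinearMap.lTensor (Fin 2 → ℂ) B = TensorProduct.map LinearMap.id B from rfl,
        LinearMap.trace_tensorProduct', traceB_zero B hB, mul_zero]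
  rw [map_add, map_add, h1, h2, map_smul, LinearMap.trace_one, add_zero, add_zero]
  have hfr : (Module.finrank ℂ ((Fin 2 → ℂ) ⊗[ℂ] (Fin n → ℂ)) : ℂ) = 2 * n := by
    rw [Module.finrank_tensorProduct, Module.finrank_fin_fun, Module.finrank_fin_fun]
    push_cast
    ring
  rw [hfr, smul_eq_mul]

theorem exists_third {n : ℕ} (hn : 3 ≤ n) (i j : Fin n) : ∃ k : Fin n, k ≠ i ∧ k ≠ j := by
  by_cases h0 : i.val = 0 ∨ j.val = 0
  · by_cases h1 : i.val = 1 ∨ j.val = 1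
    · refine ⟨⟨2, by omega⟩, ?_, ?_⟩ <;> (simp [Fin.ext_iff]; omega)
    · push_neg at h1
      refine ⟨⟨1, by omega⟩, ?_, ?_⟩ <;> (simp [Fin.ext_iff]; omega)
  · push_neg at h0
    refine ⟨⟨0, by omega⟩, ?_, ?_⟩ <;> (simp [Fin.ext_iff]; omega)

noncomputable def bb (n : ℕ) (p : Fin 2) (i : Fin n) : (Fin 2 → ℂ) ⊗[ℂ] (Fin n → ℂ) :=
  (Pi.single p 1 : Fin 2 → ℂ) ⊗ₜ (Pi.single i 1 : Fin n → ℂ)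

theorem om_bb (n : ℕ) (p q : Fin 2) (i j : Fin n) :
    om n (bb n p i) (bb n q j)
      = (if i = j then 1 else 0) * eps (Pi.single p 1) (Pi.single q 1) := by
  rw [bb, bb, om_tmul, gf_basis]

theorem om_bb_ne (n : ℕ) (p q : Fin 2) (i j : Fin n) (hij : i ≠ j) :
    om n (bb n p i) (bb n q j) = 0 := by
  rw [om_bb, if_neg hij, zero_mul]

theorem eps_01 : eps (Pi.single 0 1) (Pi.single 1 1) = 1 := by
  simp [eps]

theorem eps_10 : eps (Pi.single 1 1) (Pi.single 0 1) = -1 := by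
  simp [eps]

theorem om_bb_diag (n : ℕ) (k : Fin n) : om n (bb n 0 k) (bb n 1 k) = 1 := by
  rw [om_bb, if_pos rfl, eps_01, one_mul]

theorem om_bb_diag' (n : ℕ) (k : Fin n) : om n (bb n 1 k) (bb n 0 k) = -1 := by
  rw [om_bb, if_pos rfl, eps_10, one_mul]

end SegreTraceAux

open SegreTraceAux

/-- from the proof of Proposition 5.11: let `V = ℂ² ⊗ ℂⁿ`, `n ≥ 3`,
with `𝔤 = ℂ·Id ⊕ sl(2,ℂ) ⊕ so(n,ℂ)` acting by `a·Id + A ⊗ Id + Id ⊗ B`.  Every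
formal curvature map `R ∈ K(𝔤)` is trace free, i.e. the component of `R` in
`ℂ·Id ⊗ Λ²V*` vanishes; hence `R` takes values in `sl(2,ℂ) ⊕ so(n,ℂ)`, so that
`K(ℂ·Id ⊕ sl(2,ℂ) ⊕ so(n,ℂ)) = K(sl(2,ℂ) ⊕ so(n,ℂ))`. -/
theorem segre_sl2_so_curvature_trace_free (n : ℕ) (hn : 3 ≤ n)
    (R : ((Fin 2 → ℂ) ⊗[ℂ] (Fin n → ℂ)) →ₗ[ℂ] ((Fin 2 → ℂ) ⊗[ℂ] (Fin n → ℂ)) →ₗ[ℂ]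
      Module.End ℂ ((Fin 2 → ℂ) ⊗[ℂ] (Fin n → ℂ)))
    (hmem : ∀ x y, ∃ (a : ℂ) (A : Module.End ℂ (Fin 2 → ℂ)) (B : Module.End ℂ (Fin n → ℂ)),
      LinearMap.trace ℂ (Fin 2 → ℂ) A = 0 ∧
      (∀ u v : Fin n → ℂ, (∑ i, B u i * v i) + (∑ i, u i * B v i) = 0) ∧
      R x y = a • (1 : Module.End ℂ ((Fin 2 → ℂ) ⊗[ℂ] (Fin n → ℂ)))
        + LinearMap.rTensor (Fin n → ℂ) A + LinearMap.lTensor (Fin 2 → ℂ) B)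
    (halt : ∀ x, R x x = 0)
    (hbianchi : ∀ x y z, R x y z + R y z x + R z x y = 0) :
    ∀ x y,
      LinearMap.trace ℂ ((Fin 2 → ℂ) ⊗[ℂ] (Fin n → ℂ)) (R x y) = 0 ∧
      ∃ (A : Module.End ℂ (Fin 2 → ℂ)) (B : Module.End ℂ (Fin n → ℂ)),
        LinearMap.trace ℂ (Fin 2 → ℂ) A = 0 ∧
        (∀ u v : Fin n → ℂ, (∑ i, B u i * v i) + (∑ i, u i * B v i) = 0) ∧
        R x y = LinearMap.rTensor (Fin n → ℂ) A + LinearMap.lTensor (Fin 2 → ℂ) B := by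
  set V := (Fin 2 → ℂ) ⊗[ℂ] (Fin n → ℂ) with hV
  -- Key pointwise identity from the membership condition
  have hK : ∀ x y z w, (2 * (n : ℂ)) * (om n (R x y z) w - om n (R x y w) z)
      = (LinearMap.trace ℂ V (R x y)) * (om n z w - om n w z) := by
    intro x y z w
    obtain ⟨a, A, B, hA, hB, hR⟩ := hmem x y
    have hsA := om_sym_rTensor (n := n) A hA
    have hsB := om_sym_lTensor (n := n) B hB
    have htr : LinearMap.trace ℂ V (R x y) = a * (2 * n) := by
      rw [hR]; exact trace_formula a A B hA hB
    have hz : ∀ t : V, R x y t = a • t + LinearMap.rTensor (Fin n → ℂ) A t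
        + LinearMap.lTensor (Fin 2 → ℂ) B t := by
      intro t; rw [hR]; simp
    rw [hz z, hz w, htr]
    simp only [map_add, map_smul, LinearMap.add_apply, LinearMap.smul_apply, smul_eq_mul]
    rw [hsA z w, hsB z w]
    ring
  -- contracted Bianchi identity
  have hG : ∀ x y z w, om n (R x y z) w + om n (R y z x) w + om n (R z x y) w = 0 := by
    intro x y z w
    have h := congrArg (fun t => om n t w) (hbianchi x y z)
    simpa [map_add] using h
  -- antisymmetry
  have hs0 : ∀ x y, R x y + R y x = 0 := by
    intro x y
    have h := halt (x + y)
    simp only [map_add, LinearMap.add_apply, halt, add_zero, zero_add] at h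
    rw [add_comm]; exact h
  have hskewF : ∀ x y z w, om n (R x y z) w + om n (R y x z) w = 0 := by
    intro x y z w
    have h2 : R x y z + R y x z = 0 := by
      rw [← LinearMap.add_apply, hs0 x y, LinearMap.zero_apply]
    have h3 := congrArg (fun t => om n t w) h2
    simpa [map_add] using h3
  -- the 6-term identity  τ ∧ Ω = 0
  have hI : ∀ x y z w,
      LinearMap.trace ℂ V (R x y) * (om n z w - om n w z)
      + LinearMap.trace ℂ V (R y z) * (om n x w - om n w x)
      + LinearMap.trace ℂ V (R z w) * (om n x y - om n y x)
      + LinearMap.trace ℂ V (R w x) * (om n z y - om n y z)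
      + LinearMap.trace ℂ V (R z x) * (om n y w - om n w y)
      + LinearMap.trace ℂ V (R y w) * (om n z x - om n x z) = 0 := by
    intro x y z w
    have k1 := hK x y z w
    have k2 := hK y z x w
    have k3 := hK z w x y
    have k4 := hK w x z y
    have k5 := hK z x y w
    have k6 := hK y w z x
    have g1 := hG x y z w
    have g2 := hG y z w x
    have g3 := hG z w x y
    have g4 := hG w x y z
    have a1 := hskewF x z w y
    have a2 := hskewF y w z x
    linear_combination (-1 : ℂ) * k1 - k2 - k3 - k4 - k5 - k6
      + (2 * (n : ℂ)) * (g1 - g2 + g3 - g4)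
      - (2 * (n : ℂ)) * a1 + (2 * (n : ℂ)) * a2
  -- step: evaluate on basis vectors
  have hstep : ∀ (p q : Fin 2) (i j k : Fin n), k ≠ i → k ≠ j →
      2 * LinearMap.trace ℂ V (R (bb n p i) (bb n q j))
        + LinearMap.trace ℂ V (R (bb n 0 k) (bb n 1 k))
          * (om n (bb n p i) (bb n q j) - om n (bb n q j) (bb n p i)) = 0 := by
    intro p q i j k hki hkj
    have h := hI (bb n p i) (bb n q j) (bb n 0 k) (bb n 1 k)
    rw [om_bb_diag, om_bb_diag',
        om_bb_ne n p 1 i k (fun he => hki he.symm),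
        om_bb_ne n 1 p k i hki,
        om_bb_ne n 0 q k j hkj,
        om_bb_ne n q 0 j k (fun he => hkj he.symm),
        om_bb_ne n q 1 j k (fun he => hkj he.symm),
        om_bb_ne n 1 q k j hkj,
        om_bb_ne n 0 p k i hki,
        om_bb_ne n p 0 i k (fun he => hki he.symm)] at h
    linear_combination h
  -- diagonal quantities vanish
  have hdiagrel : ∀ i k : Fin n, k ≠ i →
      LinearMap.trace ℂ V (R (bb n 0 i) (bb n 1 i))
        + LinearMap.trace ℂ V (R (bb n 0 k) (bb n 1 k)) = 0 := by
    intro i k hki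
    have h := hstep 0 1 i i k hki hki
    rw [om_bb_diag, om_bb_diag'] at h
    linear_combination h / 2
  have hdiag : ∀ i : Fin n, LinearMap.trace ℂ V (R (bb n 0 i) (bb n 1 i)) = 0 := by
    intro i
    obtain ⟨k, hki, _⟩ := exists_third hn i i
    obtain ⟨l, hli, hlk⟩ := exists_third hn i k
    have h1 := hdiagrel i k hki
    have h2 := hdiagrel i l hli
    have h3 := hdiagrel k l hlk
    linear_combination (h1 + h2 - h3) / 2
  have hbasis : ∀ (p q : Fin 2) (i j : Fin n),
      LinearMap.trace ℂ V (R (bb n p i) (bb n q j)) = 0 := by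
    intro p q i j
    obtain ⟨k, hki, hkj⟩ := exists_third hn i j
    have h := hstep p q i j k hki hkj
    rw [hdiag k] at h
    linear_combination h / 2
  have hmain : ∀ x y, LinearMap.trace ℂ V (R x y) = 0 := by
    have hz : R.compr₂ (LinearMap.trace ℂ V) = 0 := by
      apply Module.Basis.ext ((Pi.basisFun ℂ (Fin 2)).tensorProduct (Pi.basisFun ℂ (Fin n)))
      rintro ⟨p, i⟩
      apply Module.Basis.ext ((Pi.basisFun ℂ (Fin 2)).tensorProduct (Pi.basisFun ℂ (Fin n)))
      rintro ⟨q, j⟩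
      simp only [Module.Basis.tensorProduct_apply', Pi.basisFun_apply, LinearMap.compr₂_apply,
        LinearMap.zero_apply]
      exact hbasis p q i j
    intro x y
    have := LinearMap.congr_fun (LinearMap.congr_fun hz x) y
    simpa using this
  intro x y
  refine ⟨hmain x y, ?_⟩
  obtain ⟨a, A, B, hA, hB, hR⟩ := hmem x y
  have htr : LinearMap.trace ℂ V (R x y) = a * (2 * n) := by
    rw [hR]; exact trace_formula a A B hA hB
  have ha : a = 0 := by
    have h : (0 : ℂ) = a * (2 * n) := by rw [← htr, hmain x y]
    rcases mul_eq_zero.mp h.symm with h' | h'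
    · exact h'
    · exfalso
      have hn0 : (n : ℂ) ≠ 0 := Nat.cast_ne_zero.mpr (by omega)
      exact mul_ne_zero two_ne_zero hn0 h'
  exact ⟨A, B, hA, hB, by rw [hR, ha, zero_smul, zero_add]⟩
end
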